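/- Let m ≥ 2 and p ≥ 1, let μ be a probability measure on m×p real matrices, let q₁,…,q_m be measurable functions from matrices to [0,1] with Σ_j q_j(X) = 1 for μ-a.e. X, and let β⁰ ∈ ℝᵖ with ‖β⁰‖ = 1. Assume: (a) the rank ordering property relative to β⁰; (b) for μ-a.e. X the values ⟨x₁,β⁰⟩,…,⟨x_m,β⁰⟩ are pairwise distinct, and for every unit vector β and all j ≠ k, μ{X : ⟨x_j − x_k, β⟩ = 0} = 0; (c) the transition condition: there exist C > 0 and t* > 0 with 2t*C > 1 such that for all j ≠ k and all t ∈ [0,t*], μ{X : |q_j(X)/(q_j(X)+q_k(X)) − 1/2| ≤ t} ≤ C·t, the ratio being interpreted as 0 when q_j(X)+q_k(X) = 0; (d) the restricted wedge condition: there exist R > 0, c₁ > 0 and c₂ > 0 such that (i) for each j, q_j(X) ≥ c₁ for μ-a.e. X with ‖X‖_F ≤ R, and (ii) for every unit vector β and all j ≠ k, μ({X : sign(⟨x_j − x_k, β⟩) ≠ sign(⟨x_j − x_k, β⁰⟩)} ∩ {X : ‖X‖_F ≤ R}) ≥ c₂·‖β − β⁰‖. Then for every unit vector β ∈ ℝᵖ: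 S(β⁰) − S(β) ≥ (c₁·c₂²/(4C))·‖β − β⁰‖². -/

import Mathlib

/-!
Split the score gap `S(β⁰) − S(β)` into ordered pairs `(j, k)`. For `j ≠ k` the two terms of the
pair combine into an integrand (`pairGain`) that is nonnegative by rank ordering and equals
`|q_j − q_k|` on the wedge where `β` and `β⁰` order `x_j, x_k` oppositely. On the part of the wedge
inside the region of (d)(i) and outside the transition band `|q_j/(q_j+q_k) − 1/2| ≤ t` one has
`|q_j − q_k| ≥ 2t(q_j + q_k) ≥ 4c₁t`, and (c), (d)(ii) give this part mass at least
`c₂‖β − β⁰‖ − Ct`. The choice `t = c₂‖β − β⁰‖/(2C)` is admissible because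
`c₂‖β − β⁰‖ ≤ 1 < 2·tstar·C`, and makes every unordered pair contribute `c₁c₂²‖β − β⁰‖²/C`;
averaging over the `m(m−1)/2` unordered pairs gives twice the claimed bound.
-/

open MeasureTheory
open scoped Classical

/-- The multinomial population score
`S(β) = (1/(m(m−1)))·Σ_j ∫ q_j(X)·#{k ≠ j : ⟨x_j,β⟩ > ⟨x_k,β⟩} dμ(X)`,
where the "matrix" `X` is encoded by its rows `X : Fin m → ℝᵖ`. -/
noncomputable def multiScore {m p : ℕ}
    (μ : Measure (Fin m → EuclideanSpace ℝ (Fin p)))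
    (q : Fin m → (Fin m → EuclideanSpace ℝ (Fin p)) → ℝ)
    (β : EuclideanSpace ℝ (Fin p)) : ℝ :=
  (1 / ((m : ℝ) * ((m : ℝ) - 1))) *
    ∑ j : Fin m, ∫ X, q j X *
      ((Finset.univ.filter fun k : Fin m =>
        k ≠ j ∧ (inner ℝ (X k) β : ℝ) < (inner ℝ (X j) β : ℝ)).card : ℝ) ∂μ

/-- The Frobenius norm of the matrix with rows `X 1, …, X m`. -/
noncomputable def frobNorm {m p : ℕ} (X : Fin m → EuclideanSpace ℝ (Fin p)) : ℝ :=
  Real.sqrt (∑ j : Fin m, ‖X j‖ ^ 2)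

open RealInnerProductSpace

section Pairwise

variable {ι E : Type*} [NormedAddCommGroup E] [InnerProductSpace ℝ E]

noncomputable def winWeight (q : ι → (ι → E) → ℝ) (β : E) (j k : ι) (X : ι → E) : ℝ :=
  q j X * if ⟪X k, β⟫ < ⟪X j, β⟫ then 1 else 0

noncomputable def pairGain (q : ι → (ι → E) → ℝ) (β₀ β : E) (j k : ι) (X : ι → E) : ℝ :=
  (winWeight q β₀ j k X - winWeight q β j k X) + (winWeight q β₀ k j X - winWeight q β k j X)

variable {q : ι → (ι → E) → ℝ} {β₀ β : E} {j k : ι} {X : ι → E}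

@[simp]
lemma winWeight_self : winWeight q β j j X = 0 := by
  simp [winWeight]

lemma pairGain_nonneg (hj : 0 ≤ q j X) (hk : 0 ≤ q k X)
    (hrank : ∀ j k, q k X ≤ q j X ↔ ⟪X k, β₀⟫ ≤ ⟪X j, β₀⟫)
    (hne₀ : ⟪X j, β₀⟫ ≠ ⟪X k, β₀⟫) : 0 ≤ pairGain q β₀ β j k X := by
  unfold pairGain winWeight
  rcases hne₀.lt_or_gt with h₀ | h₀
  · have := (hrank k j).2 h₀.le
    rcases lt_trichotomy ⟪X j, β⟫ ⟪X k, β⟫ with h | h | h <;>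
      simp [h₀, h₀.not_gt, h, h.not_gt] <;> linarith
  · have := (hrank j k).2 h₀.le
    rcases lt_trichotomy ⟪X j, β⟫ ⟪X k, β⟫ with h | h | h <;>
      simp [h₀, h₀.not_gt, h, h.not_gt] <;> linarith

lemma pairGain_eq_abs_of_sign_ne (hrank : ∀ j k, q k X ≤ q j X ↔ ⟪X k, β₀⟫ ≤ ⟪X j, β₀⟫)
    (hflip : Real.sign ⟪X j - X k, β⟫ ≠ Real.sign ⟪X j - X k, β₀⟫)
    (hne : ⟪X j, β⟫ ≠ ⟪X k, β⟫) (hne₀ : ⟪X j, β₀⟫ ≠ ⟪X k, β₀⟫) :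
    pairGain q β₀ β j k X = |q j X - q k X| := by
  simp only [inner_sub_left] at hflip
  unfold pairGain winWeight
  rcases hne₀.lt_or_gt with h₀ | h₀ <;> rcases hne.lt_or_gt with h | h
  · simp [Real.sign_of_neg, h, h₀, sub_neg.2] at hflip
  · have := (hrank k j).2 h₀.le
    simp [h₀, h₀.not_gt, h, h.not_gt, abs_of_nonpos (sub_nonpos.2 this)]
    ring
  · have := (hrank j k).2 h₀.le
    simp [h₀, h₀.not_gt, h, h.not_gt, abs_of_nonneg (sub_nonneg.2 this)]
    ring
  · simp [Real.sign_of_pos, h, h₀, sub_pos.2] at hflip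

lemma four_mul_le_abs_sub_of_lt_abs_div_sub_half {a b c t : ℝ} (hc : 0 < c) (ha : c ≤ a)
    (hb : c ≤ b) (ht : 0 ≤ t) (h : t < |a / (a + b) - 1 / 2|) : 4 * c * t ≤ |a - b| := by
  have hab : 0 < a + b := by linarith
  have hdiv : a / (a + b) - 1 / 2 = (a - b) / (2 * (a + b)) := by field_simp; ring
  rw [hdiv, abs_div, abs_of_pos (by positivity : (0 : ℝ) < 2 * (a + b)),
    lt_div_iff₀ (by positivity)] at h
  nlinarith

lemma pairGain_ge_of_sign_ne {c t : ℝ} (hc : 0 < c) (hj : c ≤ q j X) (hk : c ≤ q k X)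
    (ht : 0 ≤ t) (htrans : t < |q j X / (q j X + q k X) - 1 / 2|)
    (hrank : ∀ j k, q k X ≤ q j X ↔ ⟪X k, β₀⟫ ≤ ⟪X j, β₀⟫)
    (hflip : Real.sign ⟪X j - X k, β⟫ ≠ Real.sign ⟪X j - X k, β₀⟫)
    (hne : ⟪X j, β⟫ ≠ ⟪X k, β⟫) (hne₀ : ⟪X j, β₀⟫ ≠ ⟪X k, β₀⟫) :
    4 * c * t ≤ pairGain q β₀ β j k X := by
  rw [pairGain_eq_abs_of_sign_ne hrank hflip hne hne₀]
  exact four_mul_le_abs_sub_of_lt_abs_div_sub_half hc hj hk ht htrans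

end Pairwise

lemma mul_measureReal_le_integral_of_ae_le {α : Type*} [MeasurableSpace α] {μ : Measure α}
    [IsFiniteMeasure μ] {f : α → ℝ} {s : Set α} {a : ℝ} (ha : 0 ≤ a) (hf₀ : 0 ≤ᵐ[μ] f)
    (hf : Integrable f μ) (hs : ∀ᵐ x ∂μ, x ∈ s → a ≤ f x) :
    a * μ.real s ≤ ∫ x, f x ∂μ :=
  calc a * μ.real s ≤ a * μ.real {x | a ≤ f x} :=
        mul_le_mul_of_nonneg_left (ENNReal.toReal_mono (measure_ne_top μ _) (measure_mono_ae hs)) ha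
    _ ≤ ∫ x, f x ∂μ := mul_meas_ge_le_integral_of_nonneg hf₀ hf a

lemma card_mul_card_sub_one_mul_le_two_mul_sum {ι : Type*} [Fintype ι] [DecidableEq ι]
    (s : ι → ι → ℝ) (hdiag : ∀ j, s j j = 0) {L : ℝ} (h : ∀ j k, j ≠ k → L ≤ s j k + s k j) :
    Fintype.card ι * (Fintype.card ι - 1) * L ≤ 2 * ∑ j, ∑ k, s j k := by
  have hrow : ∀ j, (Fintype.card ι - 1) * L ≤ ∑ k, (s j k + s k j) := by
    intro j
    rw [← Finset.add_sum_erase _ _ (Finset.mem_univ j), hdiag, add_zero, zero_add]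
    calc (Fintype.card ι - 1 : ℝ) * L = ∑ _k ∈ Finset.univ.erase j, L := by
          rw [Finset.sum_const, Finset.card_erase_of_mem (Finset.mem_univ j), Finset.card_univ,
            nsmul_eq_mul, Nat.cast_pred (Fintype.card_pos_iff.2 ⟨j⟩)]
      _ ≤ _ := Finset.sum_le_sum fun k hk => h j k (Finset.ne_of_mem_erase hk).symm
  calc Fintype.card ι * (Fintype.card ι - 1) * L = ∑ _j : ι, (Fintype.card ι - 1) * L := by
        simp [mul_assoc]
    _ ≤ ∑ j, ∑ k, (s j k + s k j) := Finset.sum_le_sum fun j _ => hrow j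
    _ = 2 * ∑ j, ∑ k, s j k := by
        simp only [Finset.sum_add_distrib]
        rw [Finset.sum_comm (f := fun j k => s k j)]
        ring

section Integrals

variable {ι E : Type*} [NormedAddCommGroup E] [InnerProductSpace ℝ E] [MeasurableSpace E]
  [OpensMeasurableSpace E] {μ : Measure (ι → E)} {q : ι → (ι → E) → ℝ}

lemma measurable_inner_apply (β : E) (j : ι) : Measurable fun X : ι → E => ⟪X j, β⟫ :=
  (continuous_id.inner continuous_const).measurable.comp (measurable_pi_apply j)

lemma integrable_winWeight [IsFiniteMeasure μ] (hqmeas : ∀ j, Measurable (q j))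
    (hq01 : ∀ j X, q j X ∈ Set.Icc (0 : ℝ) 1) (β : E) (j k : ι) :
    Integrable (winWeight q β j k) μ := by
  refine Integrable.of_bound ?_ 1 (ae_of_all _ fun X => ?_)
  · exact ((hqmeas j).mul (Measurable.ite
      (measurableSet_lt (measurable_inner_apply β k) (measurable_inner_apply β j))
      measurable_const measurable_const)).aestronglyMeasurable
  · obtain ⟨h0, h1⟩ := hq01 j X
    unfold winWeight
    split_ifs <;> simp [abs_of_nonneg h0, h1]

lemma integral_pairGain [IsFiniteMeasure μ] (hqmeas : ∀ j, Measurable (q j))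
    (hq01 : ∀ j X, q j X ∈ Set.Icc (0 : ℝ) 1) (β₀ β : E) (j k : ι) :
    ∫ X, pairGain q β₀ β j k X ∂μ =
      ((∫ X, winWeight q β₀ j k X ∂μ) - ∫ X, winWeight q β j k X ∂μ) +
        ((∫ X, winWeight q β₀ k j X ∂μ) - ∫ X, winWeight q β k j X ∂μ) := by
  have hint := integrable_winWeight (μ := μ) hqmeas hq01
  rw [← integral_sub (hint β₀ j k) (hint β j k), ← integral_sub (hint β₀ k j) (hint β k j)]
  exact integral_add ((hint β₀ j k).sub (hint β j k)) ((hint β₀ k j).sub (hint β k j))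

lemma integral_pairGain_ge [IsFiniteMeasure μ] (hqmeas : ∀ j, Measurable (q j))
    (hq01 : ∀ j X, q j X ∈ Set.Icc (0 : ℝ) 1) {β₀ β : E} {j k : ι}
    (hrank : ∀ᵐ X ∂μ, ∀ j k, q k X ≤ q j X ↔ ⟪X k, β₀⟫ ≤ ⟪X j, β₀⟫)
    (hne₀ : ∀ᵐ X ∂μ, ⟪X j, β₀⟫ ≠ ⟪X k, β₀⟫) (hne : ∀ᵐ X ∂μ, ⟪X j, β⟫ ≠ ⟪X k, β⟫)
    {B : Set (ι → E)} {c t : ℝ} (hc : 0 < c) (ht : 0 ≤ t)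
    (hj : ∀ᵐ X ∂μ, X ∈ B → c ≤ q j X) (hk : ∀ᵐ X ∂μ, X ∈ B → c ≤ q k X) :
    4 * c * t * ((μ ({X | Real.sign ⟪X j - X k, β⟫ ≠ Real.sign ⟪X j - X k, β₀⟫} ∩ B)).toReal -
        (μ {X | |q j X / (q j X + q k X) - 1 / 2| ≤ t}).toReal) ≤
      ∫ X, pairGain q β₀ β j k X ∂μ := by
  have hint := integrable_winWeight (μ := μ) hqmeas hq01
  have hnonneg : 0 ≤ᵐ[μ] pairGain q β₀ β j k := by
    filter_upwards [hrank, hne₀] with X hr h₀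
    exact pairGain_nonneg (hq01 j X).1 (hq01 k X).1 hr h₀
  have hbound : ∀ᵐ X ∂μ, X ∈ ({X | Real.sign ⟪X j - X k, β⟫ ≠ Real.sign ⟪X j - X k, β₀⟫} ∩ B) \
      {X | |q j X / (q j X + q k X) - 1 / 2| ≤ t} → 4 * c * t ≤ pairGain q β₀ β j k X := by
    filter_upwards [hrank, hne₀, hne, hj, hk] with X hr h₀ h hjX hkX
    rintro ⟨⟨hflip, hB⟩, hT⟩
    exact pairGain_ge_of_sign_ne hc (hjX hB) (hkX hB) ht (not_le.1 hT) hr hflip h h₀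
  calc _ ≤ 4 * c * t * μ.real (({X | Real.sign ⟪X j - X k, β⟫ ≠ Real.sign ⟪X j - X k, β₀⟫} ∩ B) \
        {X | |q j X / (q j X + q k X) - 1 / 2| ≤ t}) :=
        mul_le_mul_of_nonneg_left le_measureReal_sdiff (by positivity)
    _ ≤ _ := mul_measureReal_le_integral_of_ae_le (by positivity) hnonneg
        (((hint β₀ j k).sub (hint β j k)).add ((hint β₀ k j).sub (hint β k j))) hbound

end Integrals

section Score

variable {m p : ℕ} {μ : Measure (Fin m → EuclideanSpace ℝ (Fin p))} [IsFiniteMeasure μ]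
  {q : Fin m → (Fin m → EuclideanSpace ℝ (Fin p)) → ℝ}

lemma multiScore_eq_sum_integral_winWeight (hqmeas : ∀ j, Measurable (q j))
    (hq01 : ∀ j X, q j X ∈ Set.Icc (0 : ℝ) 1) (β : EuclideanSpace ℝ (Fin p)) :
    multiScore μ q β =
      1 / ((m : ℝ) * ((m : ℝ) - 1)) * ∑ j, ∑ k, ∫ X, winWeight q β j k X ∂μ := by
  unfold multiScore
  congr 1
  refine Finset.sum_congr rfl fun j _ => ?_
  rw [← integral_finsetSum _ fun k _ => integrable_winWeight hqmeas hq01 β j k]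
  refine integral_congr_ae (ae_of_all _ fun X => ?_)
  simp only [winWeight, ← Finset.mul_sum, Finset.card_filter, Nat.cast_sum]
  congr 1
  refine Finset.sum_congr rfl fun k _ => ?_
  by_cases hkj : k = j <;> simp [hkj]

lemma half_le_multiScore_sub (hm : 2 ≤ m) (hqmeas : ∀ j, Measurable (q j))
    (hq01 : ∀ j X, q j X ∈ Set.Icc (0 : ℝ) 1) {β₀ β : EuclideanSpace ℝ (Fin p)} {L : ℝ}
    (hpair : ∀ j k, j ≠ k → L ≤ ∫ X, pairGain q β₀ β j k X ∂μ) :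
    L / 2 ≤ multiScore μ q β₀ - multiScore μ q β := by
  set s : Fin m → Fin m → ℝ := fun j k =>
    (∫ X, winWeight q β₀ j k X ∂μ) - ∫ X, winWeight q β j k X ∂μ
  have hsum := card_mul_card_sub_one_mul_le_two_mul_sum s (fun j => by simp [s])
    fun j k hjk => (hpair j k hjk).trans_eq (integral_pairGain hqmeas hq01 β₀ β j k)
  rw [Fintype.card_fin] at hsum
  have hm' : (0 : ℝ) < m * (m - 1) := by
    have : (2 : ℝ) ≤ m := by exact_mod_cast hm
    nlinarith
  rw [multiScore_eq_sum_integral_winWeight hqmeas hq01,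
    multiScore_eq_sum_integral_winWeight hqmeas hq01, ← mul_sub, ← Finset.sum_sub_distrib]
  simp_rw [← Finset.sum_sub_distrib]
  rw [one_div_mul_eq_div, le_div_iff₀ hm']
  linarith

end Score

theorem multinomial_curvature_general {m p : ℕ}
    (hm : 2 ≤ m)
    (μ : Measure (Fin m → EuclideanSpace ℝ (Fin p))) [IsProbabilityMeasure μ]
    (q : Fin m → (Fin m → EuclideanSpace ℝ (Fin p)) → ℝ)
    (hqmeas : ∀ j, Measurable (q j))
    (hq01 : ∀ j X, q j X ∈ Set.Icc (0 : ℝ) 1)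
    (β0 : EuclideanSpace ℝ (Fin p))
    -- (a) rank ordering property relative to β0
    (hrank : ∀ᵐ X ∂μ, ∀ j k : Fin m,
      q k X ≤ q j X ↔ (inner ℝ (X k) β0 : ℝ) ≤ (inner ℝ (X j) β0 : ℝ))
    -- (b) a.e. pairwise distinct utilities under β0, and null hyperplanes
    (hdistinct : ∀ᵐ X ∂μ, ∀ j k : Fin m, j ≠ k →
      (inner ℝ (X j) β0 : ℝ) ≠ (inner ℝ (X k) β0 : ℝ))
    (hnull : ∀ β : EuclideanSpace ℝ (Fin p), ‖β‖ = 1 → ∀ j k : Fin m, j ≠ k →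
      μ {X | (inner ℝ (X j - X k) β : ℝ) = 0} = 0)
    -- (c) transition condition
    (C tstar : ℝ) (hC : 0 < C) (hCt : 1 < 2 * tstar * C)
    (htrans : ∀ j k : Fin m, j ≠ k → ∀ t ∈ Set.Icc (0 : ℝ) tstar,
      (μ {X | |q j X / (q j X + q k X) - 1/2| ≤ t}).toReal ≤ C * t)
    -- (d) restricted wedge condition
    (R c₁ c₂ : ℝ) (hc₁ : 0 < c₁) (hc₂ : 0 < c₂)
    (hlower : ∀ j : Fin m, ∀ᵐ X ∂μ, frobNorm X ≤ R → c₁ ≤ q j X)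
    (hwedge : ∀ β : EuclideanSpace ℝ (Fin p), ‖β‖ = 1 → ∀ j k : Fin m, j ≠ k →
      c₂ * ‖β - β0‖ ≤
        (μ ({X : Fin m → EuclideanSpace ℝ (Fin p) |
              Real.sign (inner ℝ (X j - X k) β : ℝ) ≠
                Real.sign (inner ℝ (X j - X k) β0 : ℝ)} ∩
            {X | frobNorm X ≤ R})).toReal) :
    ∀ β : EuclideanSpace ℝ (Fin p), ‖β‖ = 1 →
      c₁ * c₂ ^ 2 / (4 * C) * ‖β - β0‖ ^ 2 ≤
        multiScore μ q β0 - multiScore μ q β := by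
  intro β hβ
  set δ := ‖β - β0‖
  have hpair : ∀ j k, j ≠ k → c₁ * c₂ ^ 2 * δ ^ 2 / C ≤ ∫ X, pairGain q β0 β j k X ∂μ := by
    intro j k hjk
    have hw := hwedge β hβ j k hjk
    set t := c₂ * δ / (2 * C)
    have ht : t ≤ tstar := by
      rw [div_le_iff₀ (by positivity)]
      linarith [hw.trans measureReal_le_one]
    have hne : ∀ᵐ X ∂μ, ⟪X j, β⟫ ≠ ⟪X k, β⟫ := by
      simpa [ae_iff, inner_sub_left, sub_eq_zero] using hnull β hβ j k hjk
    calc c₁ * c₂ ^ 2 * δ ^ 2 / C = 4 * c₁ * t * (c₂ * δ - C * t) := by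
          simp only [t]; field_simp; ring
      _ ≤ _ := by gcongr; exacts [hw, htrans j k hjk t ⟨by positivity, ht⟩]
      _ ≤ _ := integral_pairGain_ge hqmeas hq01 hrank (hdistinct.mono fun X h => h j k hjk) hne
          hc₁ (by positivity) (hlower j) (hlower k)
  have hgap := half_le_multiScore_sub hm hqmeas hq01 hpair
  have hL : 0 ≤ c₁ * c₂ ^ 2 * δ ^ 2 / C := by positivity
  have hconst : c₁ * c₂ ^ 2 / (4 * C) * δ ^ 2 = c₁ * c₂ ^ 2 * δ ^ 2 / C / 4 := by ring
  linarith

theorem multinomial_curvature {m p : ℕ}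
    (hm : 2 ≤ m) (hp : 1 ≤ p)
    (μ : Measure (Fin m → EuclideanSpace ℝ (Fin p))) [IsProbabilityMeasure μ]
    (q : Fin m → (Fin m → EuclideanSpace ℝ (Fin p)) → ℝ)
    (hqmeas : ∀ j, Measurable (q j))
    (hq01 : ∀ j X, q j X ∈ Set.Icc (0 : ℝ) 1)
    (hqsum : ∀ᵐ X ∂μ, ∑ j : Fin m, q j X = 1)
    (β0 : EuclideanSpace ℝ (Fin p)) (hβ0 : ‖β0‖ = 1)
    -- (a) rank ordering property relative to β0
    (hrank : ∀ᵐ X ∂μ, ∀ j k : Fin m,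
      q k X ≤ q j X ↔ (inner ℝ (X k) β0 : ℝ) ≤ (inner ℝ (X j) β0 : ℝ))
    -- (b) a.e. pairwise distinct utilities under β0, and null hyperplanes
    (hdistinct : ∀ᵐ X ∂μ, ∀ j k : Fin m, j ≠ k →
      (inner ℝ (X j) β0 : ℝ) ≠ (inner ℝ (X k) β0 : ℝ))
    (hnull : ∀ β : EuclideanSpace ℝ (Fin p), ‖β‖ = 1 → ∀ j k : Fin m, j ≠ k →
      μ {X | (inner ℝ (X j - X k) β : ℝ) = 0} = 0)
    -- (c) transition condition
    (C tstar : ℝ) (hC : 0 < C) (htstar : 0 < tstar) (hCt : 1 < 2 * tstar * C)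
    (htrans : ∀ j k : Fin m, j ≠ k → ∀ t ∈ Set.Icc (0 : ℝ) tstar,
      (μ {X | |q j X / (q j X + q k X) - 1/2| ≤ t}).toReal ≤ C * t)
    -- (d) restricted wedge condition
    (R c₁ c₂ : ℝ) (hR : 0 < R) (hc₁ : 0 < c₁) (hc₂ : 0 < c₂)
    (hlower : ∀ j : Fin m, ∀ᵐ X ∂μ, frobNorm X ≤ R → c₁ ≤ q j X)
    (hwedge : ∀ β : EuclideanSpace ℝ (Fin p), ‖β‖ = 1 → ∀ j k : Fin m, j ≠ k →
      c₂ * ‖β - β0‖ ≤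
        (μ ({X : Fin m → EuclideanSpace ℝ (Fin p) |
              Real.sign (inner ℝ (X j - X k) β : ℝ) ≠
                Real.sign (inner ℝ (X j - X k) β0 : ℝ)} ∩
            {X | frobNorm X ≤ R})).toReal) :
    ∀ β : EuclideanSpace ℝ (Fin p), ‖β‖ = 1 →
      c₁ * c₂ ^ 2 / (4 * C) * ‖β - β0‖ ^ 2 ≤
        multiScore μ q β0 - multiScore μ q β :=
  multinomial_curvature_general hm μ q hqmeas hq01 β0 hrank hdistinct hnull C tstar hC hCt htrans R
    c₁ c₂ hc₁ hc₂ hlower hwedge
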